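/- Assume the two-strain SI model hypotheses. If R_0^x > 1, R_0^y > 1 and R_0^x ≠ R_0^y, then the set of equilibria of the two-strain SI system is exactly {E_0, E_1, E_2}, where E_0 = (Λ/μ_S, 0, 0), E_1 = (1/r_x, a ↦ (μ_S(R_0^x − 1)/r_x)·π_x(a), 0) and E_2 = (1/r_y, 0, a ↦ (μ_S(R_0^y − 1)/r_y)·π_y(a)). -/

import Mathlib

open MeasureTheory Real Set

/-- Survival probability `π(a) = exp(-∫_0^a μ)`. -/
noncomputable def survival (μ : ℝ → ℝ) (a : ℝ) : ℝ :=
  Real.exp (-(∫ s in (0:ℝ)..a, μ s))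

/-- An equilibrium of the two-strain infection-age structured SI system:
`S ≥ 0`, `x, y ≥ 0` are continuously differentiable on `[0,∞)` with
`x' = -μₓ x`, `y' = -μ_y y`, renewal boundary conditions
`x 0 = S ∫ βₓ x`, `y 0 = S ∫ β_y y`, and the balance `Λ = μ_S S + x 0 + y 0`. -/
def IsEquilibrium (Λ μS : ℝ) (μx μy βx βy : ℝ → ℝ)
    (S : ℝ) (x y : ℝ → ℝ) : Prop :=
  0 ≤ S ∧ (∀ a, 0 ≤ a → 0 ≤ x a) ∧ (∀ a, 0 ≤ a → 0 ≤ y a) ∧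
  (∀ a, 0 ≤ a → HasDerivWithinAt x (-(μx a) * x a) (Ici 0) a) ∧
  (∀ a, 0 ≤ a → HasDerivWithinAt y (-(μy a) * y a) (Ici 0) a) ∧
  x 0 = S * ∫ a in Ici (0:ℝ), βx a * x a ∧
  y 0 = S * ∫ a in Ici (0:ℝ), βy a * y a ∧
  Λ = μS * S + x 0 + y 0

/-! Every solution of `x' = -μ x` on `[0, ∞)` is `x 0 · π`, since `x / π` has zero derivative.
Hence the renewal conditions read `x 0 = S · x 0 · rₓ` and `y 0 = S · y 0 · r_y`: each strain is
either absent or pins `S` to `1 / r`, and both cannot be present because `rₓ ≠ r_y`. The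
balance law then determines the remaining unknown. -/

theorem hasDerivWithinAt_integral_of_continuousOn_Ici {μ : ℝ → ℝ} {b a : ℝ}
    (hμ : ContinuousOn μ (Ici b)) (ha : b ≤ a) :
    HasDerivWithinAt (fun t => ∫ s in b..t, μ s) (μ a) (Ici b) a := by
  set g : ℝ → ℝ := fun s => μ (max b s)
  have hg : Continuous g :=
    hμ.comp_continuous (continuous_const.max continuous_id) fun s => le_max_left b s
  have hgμ : EqOn g μ (Ici b) := fun s hs => congrArg μ (max_eq_right hs)
  have hd := (hg.integral_hasStrictDerivAt b a).hasDerivAt.hasDerivWithinAt (s := Ici b)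
  rw [hgμ ha] at hd
  refine hd.congr (fun t ht => ?_) ?_
  · exact intervalIntegral.integral_congr fun s hs =>
      (hgμ (uIcc_of_le (mem_Ici.1 ht) ▸ hs).1).symm
  · exact intervalIntegral.integral_congr fun s hs =>
      (hgμ (uIcc_of_le ha ▸ hs).1).symm

theorem survival_pos (μ : ℝ → ℝ) (a : ℝ) : 0 < survival μ a := exp_pos _

theorem survival_zero (μ : ℝ → ℝ) : survival μ 0 = 1 := by simp [survival]

theorem hasDerivWithinAt_survival {μ : ℝ → ℝ} (hμ : ContinuousOn μ (Ici 0)) {a : ℝ}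
    (ha : 0 ≤ a) : HasDerivWithinAt (survival μ) (-μ a * survival μ a) (Ici 0) a := by
  have h := (hasDerivWithinAt_integral_of_continuousOn_Ici hμ ha).neg.exp
  simp only [Pi.neg_apply] at h
  exact h.congr_deriv (mul_comm _ _)

theorem eq_mul_survival_of_hasDerivWithinAt {μ x : ℝ → ℝ} (hμ : ContinuousOn μ (Ici 0))
    (hx : ∀ a, 0 ≤ a → HasDerivWithinAt x (-μ a * x a) (Ici 0) a) {a : ℝ} (ha : 0 ≤ a) :
    x a = x 0 * survival μ a := by
  have hq : ∀ t, 0 ≤ t → HasDerivWithinAt (fun t => x t / survival μ t) 0 (Ici 0) t :=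
    fun t ht => ((hx t ht).div (hasDerivWithinAt_survival hμ ht)
      (survival_pos μ t).ne').congr_deriv (by ring)
  have hconst := constant_of_has_deriv_right_zero
    (fun t ht => (hq t ht.1).continuousWithinAt.mono Icc_subset_Ici_self)
    (fun t ht => (hq t ht.1).mono (Ici_subset_Ici.2 ht.1)) a ⟨ha, le_rfl⟩
  rwa [survival_zero, div_one, div_eq_iff (survival_pos μ a).ne'] at hconst

theorem setIntegral_mul_eq_of_eq_mul_survival {μ β x : ℝ → ℝ}
    (hx : ∀ a, 0 ≤ a → x a = x 0 * survival μ a) :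
    ∫ a in Ici (0:ℝ), β a * x a = x 0 * ∫ a in Ici (0:ℝ), β a * survival μ a := by
  rw [← integral_const_mul]
  refine setIntegral_congr_fun measurableSet_Ici fun a ha => ?_
  rw [hx a ha, mul_left_comm]

theorem renewal_trichotomy {Λ μS S X Y rx ry : ℝ} (hμS : μS ≠ 0) (hrx : rx ≠ 0)
    (hry : ry ≠ 0) (hne : rx ≠ ry) (hX : X = S * (X * rx)) (hY : Y = S * (Y * ry))
    (hbal : Λ = μS * S + X + Y) :
    (S = Λ / μS ∧ X = 0 ∧ Y = 0) ∨
    (S = 1 / rx ∧ X = μS * (Λ * rx / μS - 1) / rx ∧ Y = 0) ∨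
    (S = 1 / ry ∧ X = 0 ∧ Y = μS * (Λ * ry / μS - 1) / ry) := by
  have absent_or_pins : ∀ {Z r : ℝ}, Z = S * (Z * r) → Z = 0 ∨ S * r = 1 := fun hZ =>
    or_iff_not_imp_left.2 fun h => (mul_right_inj' h).1 (by linear_combination -hZ)
  rcases absent_or_pins hX with hX0 | hSx <;> rcases absent_or_pins hY with hY0 | hSy
  · left
    refine ⟨?_, hX0, hY0⟩
    field_simp
    linarith
  · right; right
    refine ⟨eq_one_div_of_mul_eq_one_left hSy, hX0, ?_⟩
    field_simp
    linear_combination -ry * hbal - μS * hSy - ry * hX0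
  · right; left
    refine ⟨eq_one_div_of_mul_eq_one_left hSx, ?_, hY0⟩
    field_simp
    linear_combination -rx * hbal - μS * hSx - rx * hY0
  · refine absurd ?_ hne
    have hS : S ≠ 0 := left_ne_zero_of_mul_eq_one hSx
    exact mul_left_cancel₀ hS (hSx.trans hSy.symm)

theorem isEquilibrium_mul_survival {Λ μS S c d rx ry : ℝ} {μx μy βx βy : ℝ → ℝ}
    (hμx : ContinuousOn μx (Ici 0)) (hμy : ContinuousOn μy (Ici 0))
    (hrx : rx = ∫ a in Ici (0:ℝ), βx a * survival μx a)
    (hry : ry = ∫ a in Ici (0:ℝ), βy a * survival μy a)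
    (hS : 0 ≤ S) (hc : 0 ≤ c) (hd : 0 ≤ d) (hcx : c = 0 ∨ S * rx = 1)
    (hdy : d = 0 ∨ S * ry = 1)
    (hbal : Λ = μS * S + c + d) :
    IsEquilibrium Λ μS μx μy βx βy S (fun a => c * survival μx a)
      (fun a => d * survival μy a) := by
  have hx : ∀ a, 0 ≤ a → c * survival μx a = c * survival μx 0 * survival μx a := by
    simp [survival_zero]
  have hy : ∀ a, 0 ≤ a → d * survival μy a = d * survival μy 0 * survival μy a := by
    simp [survival_zero]
  have renewal : ∀ {z r : ℝ}, z = 0 ∨ S * r = 1 → z = S * (z * r) := by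
    rintro z r (rfl | h)
    · ring
    · rw [mul_left_comm, h, mul_one]
  refine ⟨hS, fun a _ => mul_nonneg hc (survival_pos μx a).le,
    fun a _ => mul_nonneg hd (survival_pos μy a).le,
    fun a ha => ((hasDerivWithinAt_survival hμx ha).const_mul c).congr_deriv (by ring),
    fun a ha => ((hasDerivWithinAt_survival hμy ha).const_mul d).congr_deriv (by ring), ?_, ?_, ?_⟩
  · simpa only [setIntegral_mul_eq_of_eq_mul_survival hx, ← hrx, survival_zero, mul_one] using
      renewal hcx
  · simpa only [setIntegral_mul_eq_of_eq_mul_survival hy, ← hry, survival_zero, mul_one] using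
      renewal hdy
  · simpa only [survival_zero, mul_one] using hbal

theorem IsEquilibrium.classification {Λ μS S rx ry : ℝ} {μx μy βx βy x y : ℝ → ℝ}
    (h : IsEquilibrium Λ μS μx μy βx βy S x y)
    (hμx : ContinuousOn μx (Ici 0)) (hμy : ContinuousOn μy (Ici 0))
    (hrx : rx = ∫ a in Ici (0:ℝ), βx a * survival μx a)
    (hry : ry = ∫ a in Ici (0:ℝ), βy a * survival μy a)
    (hμS : μS ≠ 0) (hrx0 : rx ≠ 0) (hry0 : ry ≠ 0) (hne : rx ≠ ry) :
    (S = Λ / μS ∧ (∀ a, 0 ≤ a → x a = 0) ∧ (∀ a, 0 ≤ a → y a = 0)) ∨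
    (S = 1 / rx ∧ (∀ a, 0 ≤ a → x a = μS * (Λ * rx / μS - 1) / rx * survival μx a) ∧
      (∀ a, 0 ≤ a → y a = 0)) ∨
    (S = 1 / ry ∧ (∀ a, 0 ≤ a → x a = 0) ∧
      (∀ a, 0 ≤ a → y a = μS * (Λ * ry / μS - 1) / ry * survival μy a)) := by
  obtain ⟨-, -, -, hxd, hyd, hx0, hy0, hbal⟩ := h
  have hxa := fun a => eq_mul_survival_of_hasDerivWithinAt hμx hxd (a := a)
  have hya := fun a => eq_mul_survival_of_hasDerivWithinAt hμy hyd (a := a)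
  rw [setIntegral_mul_eq_of_eq_mul_survival hxa, ← hrx] at hx0
  rw [setIntegral_mul_eq_of_eq_mul_survival hya, ← hry] at hy0
  rcases renewal_trichotomy hμS hrx0 hry0 hne hx0 hy0 hbal with
    ⟨hS, hX, hY⟩ | ⟨hS, hX, hY⟩ | ⟨hS, hX, hY⟩
  · exact Or.inl ⟨hS, fun a ha => by rw [hxa a ha, hX, zero_mul],
      fun a ha => by rw [hya a ha, hY, zero_mul]⟩
  · exact Or.inr (Or.inl ⟨hS, fun a ha => by rw [hxa a ha, hX],
      fun a ha => by rw [hya a ha, hY, zero_mul]⟩)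
  · exact Or.inr (Or.inr ⟨hS, fun a ha => by rw [hxa a ha, hX, zero_mul],
      fun a ha => by rw [hya a ha, hY]⟩)

/-- **If `R₀ˣ > 1`, `R₀ʸ > 1` and `R₀ˣ ≠ R₀ʸ`, the set of equilibria of the
two-strain SI system is exactly `{E₀, E₁, E₂}`.** -/
theorem equilibria_E0_E1_E2 (Λ μS : ℝ) (μx μy βx βy : ℝ → ℝ)
    (hΛ : 0 < Λ) (hμS : 0 < μS)
    (hμxc : ContinuousOn μx (Ici 0)) (hμyc : ContinuousOn μy (Ici 0))
    (rx ry : ℝ)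
    (hrx : rx = ∫ a in Ici (0:ℝ), βx a * survival μx a)
    (hry : ry = ∫ a in Ici (0:ℝ), βy a * survival μy a)
    (hrxpos : 0 < rx) (hrypos : 0 < ry)
    (R0x R0y : ℝ) (hR0x : R0x = Λ * rx / μS) (hR0y : R0y = Λ * ry / μS)
    (R0x R0y : ℝ) (hR0x : R0x = Λ * rx / μS) (hR0y : R0y = Λ * ry / μS)
    (hRx : 1 < R0x) (hRy : 1 < R0y) (hne : R0x ≠ R0y) :
    IsEquilibrium Λ μS μx μy βx βy (Λ / μS) (fun _ => 0) (fun _ => 0) ∧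
    IsEquilibrium Λ μS μx μy βx βy (1 / rx)
      (fun a => μS * (R0x - 1) / rx * survival μx a) (fun _ => 0) ∧
    IsEquilibrium Λ μS μx μy βx βy (1 / ry)
      (fun _ => 0) (fun a => μS * (R0y - 1) / ry * survival μy a) ∧
    ∀ S x y, IsEquilibrium Λ μS μx μy βx βy S x y →
      (S = Λ / μS ∧ (∀ a, 0 ≤ a → x a = 0) ∧ (∀ a, 0 ≤ a → y a = 0)) ∨
      (S = 1 / rx ∧ (∀ a, 0 ≤ a → x a = μS * (R0x - 1) / rx * survival μx a) ∧
        (∀ a, 0 ≤ a → y a = 0)) ∨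
      (S = 1 / ry ∧ (∀ a, 0 ≤ a → x a = 0) ∧
        (∀ a, 0 ≤ a → y a = μS * (R0y - 1) / ry * survival μy a)) := by
  subst hR0x hR0y
  have hcx : 0 ≤ μS * (Λ * rx / μS - 1) / rx :=
    div_nonneg (mul_nonneg hμS.le (sub_nonneg.2 hRx.le)) hrxpos.le
  have hcy : 0 ≤ μS * (Λ * ry / μS - 1) / ry :=
    div_nonneg (mul_nonneg hμS.le (sub_nonneg.2 hRy.le)) hrypos.le
  have hrne : rx ≠ ry := fun h => hne (by rw [h])
  refine ⟨?_, ?_, ?_, fun S x y h => h.classification hμxc hμyc hrx hry hμS.ne' hrxpos.ne'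
    hrypos.ne' hrne⟩
  · simpa only [zero_mul] using isEquilibrium_mul_survival (c := 0) (d := 0) hμxc hμyc hrx hry
      (div_nonneg hΛ.le hμS.le) le_rfl le_rfl (.inl rfl) (.inl rfl) (by field_simp; ring)
  · simpa only [zero_mul] using isEquilibrium_mul_survival (d := 0) hμxc hμyc hrx hry
      (by positivity) hcx le_rfl (.inr (one_div_mul_cancel hrxpos.ne')) (.inl rfl)
      (by field_simp; ring)
  · simpa only [zero_mul] using isEquilibrium_mul_survival (c := 0) hμxc hμyc hrx hry
      (by positivity) le_rfl hcy (.inl rfl) (.inr (one_div_mul_cancel hrypos.ne'))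
      (by field_simp; ring)
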